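/- arXiv:1907.09097 — 2 statements merged into one kernel-verified Lean document; each statement's English description precedes it below -/
import Mathlib

section
/- If after a call sequence σ some agent a is such that no other agent is familiar with a's secret, then any call sequence σ.τ after which all agents are experts satisfies |τ| ≥ n − 1. Consequently, a call sequence whose first two calls do not involve some agent has length at least 5 when n = 4 and all agents become experts. -/
/-- A call is an ordered pair of distinct agents (caller, callee). -/
def Call (n : ℕ) : Type := {p : Fin n × Fin n // p.1 ≠ p.2}

namespace Gossip

open Finset

variable {n : ℕ}

/-- The caller of a call. -/
def caller (c : Call n) : Fin n := c.1.1

/-- The callee of a call. -/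
def callee (c : Call n) : Fin n := c.1.2

/-- Agent `a` is involved in call `c`. -/
def involves (c : Call n) (a : Fin n) : Prop := a = caller c ∨ a = callee c

/-- A gossip situation assigns to each agent the set of secrets it is familiar with;
secrets are identified with the agents holding them. -/
def Situation (n : ℕ) := Fin n → Finset (Fin n)

/-- The initial gossip situation: every agent only holds its own secret. -/
def root : Situation n := fun a => {a}

/-- The effect of a call on a gossip situation: caller and callee share their secrets. -/
def applyCall (c : Call n) (s : Situation n) : Situation n :=
  fun x => if x = caller c ∨ x = callee c then s (caller c) ∪ s (callee c) else s x

/-- The effect of a call sequence on a gossip situation. -/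
def applySeq (σ : List (Call n)) (s : Situation n) : Situation n :=
  σ.foldl (fun t c => applyCall c t) s

end Gossip

open Gossip

/-- An agent is an expert in a situation if it is familiar with all secrets. -/
def IsExpert {n : ℕ} (s : Gossip.Situation n) (a : Fin n) : Prop :=
  s a = Finset.univ

/-!
A call raises the number of agents familiar with a fixed secret by at most one, since only the
other participant can learn it. If after `σ` only `a` knows `a`'s secret, then `n - 1` further
agents must still learn it before everybody is an expert, so `τ` has at least `n - 1` calls.
For `n = 4`, two opening calls avoiding `a` leave `a`'s secret isolated, so the remaining calls
number at least `3`.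
-/

namespace Gossip

variable {n : ℕ}

/-- Typed on functions rather than `Situation n`, through which `a ∈ s b` is not seen to be
decidable. -/
def knowers (s : Fin n → Finset (Fin n)) (a : Fin n) : Finset (Fin n) :=
  Finset.univ.filter (a ∈ s ·)

@[simp]
lemma mem_knowers {s : Situation n} {a b : Fin n} : b ∈ knowers s a ↔ a ∈ s b := by
  simp [knowers]

def IsIsolated (s : Situation n) (a : Fin n) : Prop :=
  ∀ b, b ≠ a → a ∉ s b

lemma applySeq_cons (c : Call n) (σ : List (Call n)) (s : Situation n) :
    applySeq (c :: σ) s = applySeq σ (applyCall c s) := rfl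

lemma applySeq_append (σ τ : List (Call n)) (s : Situation n) :
    applySeq (σ ++ τ) s = applySeq τ (applySeq σ s) :=
  List.foldl_append

lemma exists_knowers_applyCall_subset_insert (c : Call n) (s : Situation n) (a : Fin n) :
    ∃ x, knowers (applyCall c s) a ⊆ insert x (knowers s a) := by
  by_cases h : a ∈ s (caller c)
  · refine ⟨callee c, fun b hb => ?_⟩
    simp only [mem_knowers, applyCall, Finset.mem_insert] at hb ⊢
    split_ifs at hb with hbc
    · rcases hbc with rfl | rfl
      exacts [Or.inr h, Or.inl rfl]
    · exact Or.inr hb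
  · refine ⟨caller c, fun b hb => ?_⟩
    simp only [mem_knowers, applyCall, Finset.mem_insert] at hb ⊢
    split_ifs at hb with hbc
    · rcases hbc with rfl | rfl
      exacts [Or.inl rfl, Or.inr ((Finset.mem_union.1 hb).resolve_left h)]
    · exact Or.inr hb

lemma card_knowers_applyCall_le (c : Call n) (s : Situation n) (a : Fin n) :
    (knowers (applyCall c s) a).card ≤ (knowers s a).card + 1 := by
  obtain ⟨x, hx⟩ := exists_knowers_applyCall_subset_insert c s a
  exact (Finset.card_le_card hx).trans (Finset.card_insert_le x _)

lemma card_knowers_applySeq_le (τ : List (Call n)) (s : Situation n) (a : Fin n) :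
    (knowers (applySeq τ s) a).card ≤ (knowers s a).card + τ.length := by
  induction τ generalizing s with
  | nil => simp [applySeq]
  | cons c τ ih =>
    have := card_knowers_applyCall_le c s a
    rw [applySeq_cons, List.length_cons]
    linarith [ih (applyCall c s)]

lemma card_knowers_le_one_of_isIsolated {s : Situation n} {a : Fin n} (h : IsIsolated s a) :
    (knowers s a).card ≤ 1 := by
  have hsub : knowers s a ⊆ {a} := fun b hb =>
    Finset.mem_singleton.2 (by_contra fun hba => h b hba (mem_knowers.1 hb))
  simpa using Finset.card_le_card hsub

lemma knowers_eq_univ_of_forall_isExpert {s : Situation n} (h : ∀ b, IsExpert s b) (a : Fin n) :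
    knowers s a = Finset.univ :=
  Finset.eq_univ_of_forall fun b => mem_knowers.2 (h b ▸ Finset.mem_univ a)

lemma isIsolated_root (a : Fin n) : IsIsolated root a :=
  fun _ hba hab => hba (Finset.mem_singleton.1 hab).symm

lemma IsIsolated.applySeq {s : Situation n} {a : Fin n} (h : IsIsolated s a) {σ : List (Call n)}
    (hσ : ∀ c ∈ σ, ¬ involves c a) : IsIsolated (applySeq σ s) a := by
  induction σ generalizing s with
  | nil => exact h
  | cons c σ ih =>
    refine ih (fun b hba hab => ?_) fun c' hc' => hσ c' (List.mem_cons_of_mem c hc')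
    have hc : a ≠ caller c ∧ a ≠ callee c := not_or.1 (hσ c List.mem_cons_self)
    simp only [applyCall] at hab
    split_ifs at hab
    · rcases Finset.mem_union.1 hab with hab | hab
      exacts [h _ hc.1.symm hab, h _ hc.2.symm hab]
    · exact h b hba hab

theorem le_length_of_isIsolated {s : Situation n} {a : Fin n} (h : IsIsolated s a)
    {τ : List (Call n)} (hτ : ∀ b, IsExpert (applySeq τ s) b) : n - 1 ≤ τ.length := by
  have hgrow := card_knowers_applySeq_le τ s a
  rw [knowers_eq_univ_of_forall_isExpert hτ, Finset.card_univ, Fintype.card_fin] at hgrow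
  have := card_knowers_le_one_of_isIsolated h
  omega

end Gossip

/-- if after `σ` nobody else knows `a`'s secret, then at least `n − 1`
further calls are needed before all agents are experts; consequently for `n = 4`,
a call sequence whose first two calls do not involve some agent and after which
all agents are experts has length at least 5. -/
theorem lower_bound_after_isolation :
    (∀ (n : ℕ), 3 ≤ n → ∀ (a : Fin n) (σ τ : List (Call n)),
      (∀ b : Fin n, b ≠ a → a ∉ applySeq σ root b) →
      (∀ b : Fin n, IsExpert (applySeq (σ ++ τ) root) b) →
      n - 1 ≤ τ.length) ∧
    (∀ (σ : List (Call 4)) (a : Fin 4),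
      2 ≤ σ.length →
      (∀ c ∈ σ.take 2, ¬ involves c a) →
      (∀ b : Fin 4, IsExpert (applySeq σ root) b) →
      5 ≤ σ.length) := by
  refine ⟨fun n _ a σ τ hiso hexp => le_length_of_isIsolated hiso (applySeq_append σ τ root ▸ hexp),
    fun σ a hlen hopen hexp => ?_⟩
  have hiso : IsIsolated (applySeq (σ.take 2) root) a := (isIsolated_root a).applySeq hopen
  rw [← List.take_append_drop 2 σ, applySeq_append] at hexp
  have := le_length_of_isIsolated hiso hexp
  rw [List.length_drop] at this
  omega
end

section
/- If after a call sequence σ agent a is familiar with the secret B of a different agent b, then there exists a chain of distinct agents a₁ = b, a₂, …, a_k = a (2 ≤ k ≤ n) such that for each consecutive pair, each is familiar with the other's secret after σ (i.e., F_{a_h} A_{h+1} and F_{a_{h+1}} A_h hold). -/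
/-!
Mutual familiarity is the adjacency of a graph on the agents, which only grows along a call
sequence. Starting from `root`, the following invariant is kept: every agent holds its own
secret, and every secret `y` held by `x` is joined to `x` by a path in that graph. After a call
between `u` and `v` the two are adjacent, and a secret newly held by `u` was held by `v`, so it
reaches `u` through `v`. A path from `b` to `a` in the final graph is the required chain.
-/

namespace Gossip

variable {n : ℕ}

def familiarityGraph (s : Situation n) : SimpleGraph (Fin n) where
  Adj x y := x ≠ y ∧ y ∈ s x ∧ x ∈ s y
  symm := ⟨fun _ _ h => ⟨h.1.symm, h.2.2, h.2.1⟩⟩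
  loopless := ⟨fun _ h => h.1 rfl⟩

theorem familiarityGraph_adj {s : Situation n} {x y : Fin n} :
    (familiarityGraph s).Adj x y ↔ x ≠ y ∧ y ∈ s x ∧ x ∈ s y :=
  Iff.rfl

theorem familiarityGraph_mono {s t : Situation n} (h : ∀ x, s x ⊆ t x) :
    familiarityGraph s ≤ familiarityGraph t :=
  fun x y ⟨hne, hyx, hxy⟩ => ⟨hne, h x hyx, h y hxy⟩

theorem applyCall_of_involves {c : Call n} {x : Fin n} (hx : involves c x) (s : Situation n) :
    applyCall c s x = s (caller c) ∪ s (callee c) :=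
  if_pos hx

theorem applyCall_of_not_involves {c : Call n} {x : Fin n} (hx : ¬involves c x)
    (s : Situation n) : applyCall c s x = s x :=
  if_neg hx

theorem subset_applyCall (c : Call n) (s : Situation n) (x : Fin n) :
    s x ⊆ applyCall c s x := by
  by_cases hx : involves c x
  · rw [applyCall_of_involves hx]
    rcases hx with rfl | rfl
    exacts [Finset.subset_union_left, Finset.subset_union_right]
  · rw [applyCall_of_not_involves hx]

theorem reachable_applyCall_of_involves {c : Call n} {s : Situation n} (hs : ∀ x, x ∈ s x)
    {x y : Fin n} (hx : involves c x) (hy : involves c y) :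
    (familiarityGraph (applyCall c s)).Reachable x y := by
  have hmem : ∀ {u v}, involves c u → involves c v → u ∈ applyCall c s v := by
    rintro u v (rfl | rfl) hv <;> rw [applyCall_of_involves hv]
    exacts [Finset.mem_union_left _ (hs _), Finset.mem_union_right _ (hs _)]
  by_cases hxy : x = y
  · exact hxy ▸ SimpleGraph.Reachable.refl x
  · exact (familiarityGraph_adj.mpr ⟨hxy, hmem hy hx, hmem hx hy⟩).reachable

theorem reachable_of_mem_applyCall {c : Call n} {s : Situation n} (hs : ∀ x, x ∈ s x)
    (hreach : ∀ x y, y ∈ s x → (familiarityGraph s).Reachable y x)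
    {x y : Fin n} (hy : y ∈ applyCall c s x) :
    (familiarityGraph (applyCall c s)).Reachable y x := by
  have hmono := familiarityGraph_mono (subset_applyCall c s)
  by_cases hx : involves c x
  · rw [applyCall_of_involves hx] at hy
    obtain ⟨u, hu, hyu⟩ : ∃ u, involves c u ∧ y ∈ s u := by
      rcases Finset.mem_union.mp hy with hy | hy
      exacts [⟨_, Or.inl rfl, hy⟩, ⟨_, Or.inr rfl, hy⟩]
    exact ((hreach u y hyu).mono hmono).trans (reachable_applyCall_of_involves hs hu hx)
  · rw [applyCall_of_not_involves hx] at hy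
    exact (hreach x y hy).mono hmono

theorem reachable_of_mem_applySeq (σ : List (Call n)) {s : Situation n} (hs : ∀ x, x ∈ s x)
    (hreach : ∀ x y, y ∈ s x → (familiarityGraph s).Reachable y x)
    {x y : Fin n} (hy : y ∈ applySeq σ s x) :
    (familiarityGraph (applySeq σ s)).Reachable y x := by
  induction σ generalizing s with
  | nil => exact hreach x y hy
  | cons c σ ih =>
    exact ih (fun z => subset_applyCall c s z (hs z))
      (fun _ _ => reachable_of_mem_applyCall hs hreach) hy

theorem reachable_of_mem_applySeq_root {σ : List (Call n)} {x y : Fin n}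
    (hy : y ∈ applySeq σ root x) : (familiarityGraph (applySeq σ root)).Reachable y x :=
  reachable_of_mem_applySeq σ (fun _ => Finset.mem_singleton_self _)
    (fun _ _ h => Finset.mem_singleton.mp h ▸ SimpleGraph.Reachable.refl _) hy

end Gossip

open Gossip

/-- if agent `a` is familiar with the secret of a different agent `b`
after `σ`, then there is a chain of distinct agents from `b` to `a` in which each
pair of consecutive agents are mutually familiar with each other's secrets. -/
theorem familiarity_chain {n : ℕ} (σ : List (Call n))
    (a b : Fin n) (hab : a ≠ b) (h : b ∈ applySeq σ root a) :
    ∃ l : List (Fin n), l.Nodup ∧ 2 ≤ l.length ∧ l.length ≤ n ∧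
      l.head? = some b ∧ l.getLast? = some a ∧
      ∀ (i : ℕ) (hi : i + 1 < l.length),
        (l[i + 1] ∈ applySeq σ root (l[i]'(by omega))) ∧
        ((l[i]'(by omega)) ∈ applySeq σ root l[i + 1]) := by
  obtain ⟨p, hp⟩ := (reachable_of_mem_applySeq_root h).exists_isPath
  have hlength : p.length ≠ 0 := fun h0 => hab (p.eq_of_length_eq_zero h0).symm
  refine ⟨p.support, hp.support_nodup, ?_, ?_, ?_, ?_, fun i hi => ?_⟩
  · rw [p.length_support]
    omega
  · simpa using hp.support_nodup.length_le_card
  · rw [List.head?_eq_some_head p.support_ne_nil, p.head_support]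
  · rw [List.getLast?_eq_some_getLast p.support_ne_nil, p.getLast_support]
  · exact (familiarityGraph_adj.mp (List.isChain_iff_getElem.mp p.isChain_adj_support i hi)).2
end
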